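/- Consider the ternary QUANT iteration with unit teacher vector w* ∈ ℝⁿ. If w* ∉ Q₃, then ‖y^t‖₁ → ∞ as t → ∞, where ‖·‖₁ is the ℓ¹ norm on ℝⁿ. -/
import Mathlib


open Real Filter Set

/-- Euclidean norm of a vector in `Fin k → ℝ`. -/
noncomputable def euclNorm {k : ℕ} (x : Fin k → ℝ) : ℝ := Real.sqrt (∑ i, x i ^ 2)

/-- ℓ¹ norm of a vector in `Fin k → ℝ`. -/
noncomputable def l1Norm {k : ℕ} (x : Fin k → ℝ) : ℝ := ∑ i, |x i|

/-- `s` is a ternary sign vector, i.e. `s ∈ {−1,0,1}ⁿ`. -/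
def IsTern {k : ℕ} (s : Fin k → ℝ) : Prop := ∀ i, s i = -1 ∨ s i = 0 ∨ s i = 1

/-- `x` belongs to the ternary quantized set `Q₃ = {δ·s : δ ≥ 0, s ∈ {−1,0,1}ⁿ}`. -/
def InQ3 {k : ℕ} (x : Fin k → ℝ) : Prop :=
  ∃ δ : ℝ, 0 ≤ δ ∧ ∃ s : Fin k → ℝ, IsTern s ∧ x = δ • s

/-- `u` is a normalized ternary projection of `y`: `u = s/‖s‖` for a nonzero
ternary sign vector `s` maximizing `⟨y, s'⟩/‖s'‖` over nonzero ternary `s'`. -/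
noncomputable def IsNTernProj {k : ℕ} (y u : Fin k → ℝ) : Prop :=
  ∃ s : Fin k → ℝ, IsTern s ∧ s ≠ 0 ∧
    (∀ s' : Fin k → ℝ, IsTern s' → s' ≠ 0 →
      (∑ i, y i * s' i) / euclNorm s' ≤ (∑ i, y i * s i) / euclNorm s) ∧
    u = fun i => s i / euclNorm s

lemma sumsq_one {k : ℕ} {x : Fin k → ℝ} (h : euclNorm x = 1) : ∑ i, x i ^ 2 = 1 := by
  have h0 : 0 ≤ ∑ i, x i ^ 2 := Finset.sum_nonneg fun i _ => sq_nonneg _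
  have := congrArg (· ^ 2) h
  simpa [euclNorm, Real.sq_sqrt h0] using this

lemma euclNorm_pos {k : ℕ} {s : Fin k → ℝ} (hs : s ≠ 0) : 0 < euclNorm s := by
  obtain ⟨i, hi⟩ := Function.ne_iff.1 hs
  have h1 : (0:ℝ) < s i ^ 2 := by
    have : s i ≠ 0 := by simpa using hi
    positivity
  have h2 : s i ^ 2 ≤ ∑ j, s j ^ 2 :=
    Finset.single_le_sum (f := fun j => s j ^ 2) (fun j _ => sq_nonneg _) (Finset.mem_univ i)
  exact Real.sqrt_pos.2 (lt_of_lt_of_le h1 h2)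

lemma norm_unit {k : ℕ} {s : Fin k → ℝ} (hs : s ≠ 0) :
    ∑ i, (s i / euclNorm s) ^ 2 = 1 := by
  have hp := euclNorm_pos hs
  have h0 : 0 ≤ ∑ j, s j ^ 2 := Finset.sum_nonneg fun i _ => sq_nonneg _
  have hsq : euclNorm s ^ 2 = ∑ j, s j ^ 2 := Real.sq_sqrt h0
  have : ∑ i, (s i / euclNorm s) ^ 2 = (∑ j, s j ^ 2) / euclNorm s ^ 2 := by
    simp_rw [div_pow]
    rw [← Finset.sum_div]
  have hne : euclNorm s ^ 2 ≠ 0 := by positivity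
  rw [this, hsq, div_self (by rw [← hsq]; exact hne)]

lemma inner_lt_one {k : ℕ} {x u : Fin k → ℝ} (hx : ∑ i, x i ^ 2 = 1)
    (hu : ∑ i, u i ^ 2 = 1) (hne : x ≠ u) : ∑ i, x i * u i < 1 := by
  obtain ⟨i, hi⟩ := Function.ne_iff.1 hne
  have hpos : 0 < ∑ j, (x j - u j) ^ 2 := by
    have h1 : (0:ℝ) < (x i - u i) ^ 2 := by
      have : x i - u i ≠ 0 := sub_ne_zero.2 hi
      positivity
    exact lt_of_lt_of_le h1
      (Finset.single_le_sum (f := fun j => (x j - u j) ^ 2) (fun j _ => sq_nonneg _)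
        (Finset.mem_univ i))
  have hexp : ∑ j, (x j - u j) ^ 2
      = (∑ j, x j ^ 2) + (∑ j, u j ^ 2) - 2 * ∑ j, x j * u j := by
    rw [Finset.mul_sum, ← Finset.sum_add_distrib, ← Finset.sum_sub_distrib]
    exact Finset.sum_congr rfl fun j _ => by ring
  rw [hexp, hx, hu] at hpos
  linarith

lemma tern_finite (k : ℕ) : {s : Fin k → ℝ | IsTern s}.Finite := by
  have hfin : (Set.pi Set.univ (fun _ : Fin k => ({-1, 0, 1} : Set ℝ))).Finite :=
    Set.Finite.pi (fun i => (Set.finite_singleton 1).insert 0 |>.insert (-1))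
  refine hfin.subset ?_
  intro s hs i _
  rcases hs i with h | h | h <;> simp [h]

/-- Ternary QUANT iteration: if the unit teacher vector `w*` is not in `Q₃`,
then the ℓ¹ norm of the auxiliary iterates tends to infinity. -/
theorem stmt10 (n m : ℕ) (hn : 1 ≤ n)
    (wstar : Fin n → ℝ) (hws : euclNorm wstar = 1) (hQ : ¬ InQ3 wstar)
    (v : Fin m → ℝ) (hv : v ≠ 0)
    (c : ℝ) (hc : c = euclNorm v ^ 2 / (2 * Real.sqrt (2 * π)))
    (η : ℕ → ℝ) (ηbar : ℝ) (hη0 : ∀ t, 0 < η t) (hηb : ∀ t, η t ≤ ηbar)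
    (hηsum : Tendsto (fun T => ∑ t ∈ Finset.range T, η t) atTop atTop)
    (y w : ℕ → Fin n → ℝ)
    (hproj : ∀ t, IsNTernProj (y t) (w t))
    (hy : ∀ t i, y (t + 1) i = y t i + η t * c * (wstar i - w t i)) :
    Tendsto (fun t => l1Norm (y t)) atTop atTop := by
  have hcpos : 0 < c := by
    rw [hc]
    have hv2 : 0 < euclNorm v := euclNorm_pos hv
    have hsp : 0 < Real.sqrt (2 * π) := Real.sqrt_pos.2 (by positivity)
    positivity
  set K : Set (Fin n → ℝ) :=
    (fun s => fun i => s i / euclNorm s) '' {s | IsTern s ∧ s ≠ 0} with hKdef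
  have hKfin : K.Finite := ((tern_finite n).subset (fun s hs => hs.1)).image _
  have hwK : ∀ t, w t ∈ K := by
    intro t
    obtain ⟨s, hst, hsne, _, hwt⟩ := hproj t
    exact ⟨s, ⟨hst, hsne⟩, hwt.symm⟩
  have hFne : hKfin.toFinset.Nonempty :=
    ⟨w 0, hKfin.mem_toFinset.2 (hwK 0)⟩
  set a := hKfin.toFinset.sup' hFne (fun u => ∑ i, wstar i * u i) with ha
  have haw : ∀ t, ∑ i, wstar i * w t i ≤ a := fun t =>
    Finset.le_sup' (fun u => ∑ i, wstar i * u i) (hKfin.mem_toFinset.2 (hwK t))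
  have halt : a < 1 := by
    rw [ha, Finset.sup'_lt_iff]
    intro u hu
    rw [hKfin.mem_toFinset] at hu
    obtain ⟨s, ⟨hst, hsne⟩, rfl⟩ := hu
    refine inner_lt_one (sumsq_one hws) (norm_unit hsne) ?_
    intro heq
    apply hQ
    refine ⟨(euclNorm s)⁻¹, le_of_lt (inv_pos.2 (euclNorm_pos hsne)), s, hst, ?_⟩
    funext i
    rw [heq]
    simp [div_eq_inv_mul]
  have key : ∀ t, ∑ i, wstar i * y (t+1) i
      = (∑ i, wstar i * y t i) + η t * c * (1 - ∑ i, wstar i * w t i) := by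
    intro t
    have h1 : ∀ i ∈ Finset.univ, wstar i * y (t+1) i
        = wstar i * y t i + η t * c * wstar i ^ 2 - η t * c * (wstar i * w t i) :=
      fun i _ => by rw [hy t i]; ring
    rw [Finset.sum_congr rfl h1, Finset.sum_sub_distrib, Finset.sum_add_distrib,
      ← Finset.mul_sum, ← Finset.mul_sum, sumsq_one hws]
    ring
  have hlb : ∀ T, (∑ i, wstar i * y 0 i)
      + c * (1 - a) * ∑ t ∈ Finset.range T, η t ≤ ∑ i, wstar i * y T i := by
    intro T
    induction T with
    | zero => simp
    | succ T ih =>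
      have hpos : (0:ℝ) ≤ η T * c := le_of_lt (mul_pos (hη0 T) hcpos)
      have h3 : η T * c * (1 - a) ≤ η T * c * (1 - ∑ i, wstar i * w T i) :=
        mul_le_mul_of_nonneg_left (by linarith [haw T]) hpos
      rw [Finset.sum_range_succ, key T]
      nlinarith [h3, ih]
  have habs : ∀ i, |wstar i| ≤ 1 := by
    intro i
    have h1 : wstar i ^ 2 ≤ 1 := by
      rw [← sumsq_one hws]
      exact Finset.single_le_sum (f := fun j => wstar j ^ 2) (fun j _ => sq_nonneg _)
        (Finset.mem_univ i)
    nlinarith [abs_nonneg (wstar i), sq_abs (wstar i)]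
  have hl1 : ∀ T, ∑ i, wstar i * y T i ≤ l1Norm (y T) := by
    intro T
    unfold l1Norm
    refine Finset.sum_le_sum fun i _ => ?_
    calc wstar i * y T i ≤ |wstar i * y T i| := le_abs_self _
      _ = |wstar i| * |y T i| := abs_mul _ _
      _ ≤ 1 * |y T i| := mul_le_mul_of_nonneg_right (habs i) (abs_nonneg _)
      _ = |y T i| := one_mul _
  have hg : Tendsto (fun T => (∑ i, wstar i * y 0 i)
      + c * (1 - a) * ∑ t ∈ Finset.range T, η t) atTop atTop := by
    apply tendsto_atTop_add_const_left
    exact hηsum.const_mul_atTop (by nlinarith : (0:ℝ) < c * (1 - a))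
  exact tendsto_atTop_mono (fun T => le_trans (hlb T) (hl1 T)) hg
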